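/- arXiv:2501.11791 — 4 statements merged into one kernel-verified Lean document; each statement's English description precedes it below -/
import Mathlib

section
/- Suppose β* ≠ 0. For every u with 1 ≤ u ≤ r and every λ satisfying 0 < λ < tr(Σ_ε) / (σ_max(β* β*') · σ_max(Φ_u^{-1} D_u²)), one has R_E(u, λ) < R_N(u, u) = tr(Σ_ε)·tr(V_u D_u^{-2} V_u' Σ_x), where σ_max(·) denotes the largest eigenvalue. -/
open Matrix
open scoped Kronecker

/-- The vectorization `vec(β)` of a `p × q` matrix, indexed to match `I_q ⊗ A`
(the index `(k, i)` with `k ∈ Fin q`, `i ∈ Fin p` corresponds to entry `β i k`). -/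
def vecM {p q : ℕ} (β : Matrix (Fin p) (Fin q) ℝ) : Fin q × Fin p → ℝ :=
  fun ki => β ki.2 ki.1

/-- EgReg reducible prediction risk
`R_E(d, λ) = tr(Σ_ε)·tr(V_d D_d⁻² Φ_d² (Φ_d + λ I_d)⁻² V_d' Σ_x)
  + λ²·vec(β*)'(I_q ⊗ V_d (Φ_d + λ I_d)⁻¹ V_d' Σ_x V_d (Φ_d + λ I_d)⁻¹ V_d') vec(β*)`. -/
noncomputable def RE {p q d : ℕ}
    (Vd : Matrix (Fin p) (Fin d) ℝ) (Dd Φd : Matrix (Fin d) (Fin d) ℝ)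
    (Sx : Matrix (Fin p) (Fin p) ℝ) (Se : Matrix (Fin q) (Fin q) ℝ)
    (β : Matrix (Fin p) (Fin q) ℝ) (lam : ℝ) : ℝ :=
  Se.trace * (Vd * (Dd ^ 2)⁻¹ * Φd ^ 2 * ((Φd + lam • 1) ^ 2)⁻¹ * Vdᵀ * Sx).trace
  + lam ^ 2 * vecM β ⬝ᵥ (((1 : Matrix (Fin q) (Fin q) ℝ) ⊗ₖ
      (Vd * (Φd + lam • 1)⁻¹ * Vdᵀ * Sx * Vd * (Φd + lam • 1)⁻¹ * Vdᵀ)).mulVec (vecM β))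

/-- NIECE reducible prediction risk
`R_N(u, d) = tr(Σ_ε)·tr(V_u D_u⁻² V_u' Σ_x)
  + vec(β*)'(I_q ⊗ (V_u V_u' − V_d V_d') Σ_x (V_u V_u' − V_d V_d')) vec(β*)`. -/
noncomputable def RN {p q u d : ℕ}
    (Vu : Matrix (Fin p) (Fin u) ℝ) (Du : Matrix (Fin u) (Fin u) ℝ)
    (Vd : Matrix (Fin p) (Fin d) ℝ)
    (Sx : Matrix (Fin p) (Fin p) ℝ) (Se : Matrix (Fin q) (Fin q) ℝ)
    (β : Matrix (Fin p) (Fin q) ℝ) : ℝ :=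
  Se.trace * (Vu * (Du ^ 2)⁻¹ * Vuᵀ * Sx).trace
  + vecM β ⬝ᵥ (((1 : Matrix (Fin q) (Fin q) ℝ) ⊗ₖ
      ((Vu * Vuᵀ - Vd * Vdᵀ) * Sx * (Vu * Vuᵀ - Vd * Vdᵀ))).mulVec (vecM β))

/-- The largest eigenvalue of a square matrix. -/
noncomputable def maxEig {m : ℕ} (A : Matrix (Fin m) (Fin m) ℝ) : ℝ :=
  sSup {t : ℝ | ∃ w : Fin m → ℝ, w ≠ 0 ∧ A.mulVec w = t • w}

/-!
Write `T = tr(Σ_ε)`, `c = σ_max(β βᵀ)` and `S = V_uᵀ Σ_x V_u`, whose diagonal is positive.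
Everything is diagonal in the retained singular directions: both variance terms are weighted
sums `∑ⱼ wⱼ S_jj`, and with `N = V_u (Φ_u + λ)⁻¹ V_uᵀ` the EgReg bias `λ² tr(β βᵀ N Σ_x N)` is
at most `λ² c tr(N Σ_x N) = λ² c ∑ⱼ S_jj / (φⱼ + λ)²`, because `c • 1 - β βᵀ` and `N Σ_x N` are
positive semidefinite. The NIECE risk at `d = u` has no bias term. So it suffices to compare
the weights coordinatewise: `T φ² / (σ² (φ + λ)²) + λ² c / (φ + λ)² < T / σ²` amounts to
`λ c σ² < T (2φ + λ)`, which follows from `λ c σ² / φ < T`, and the bound on `λ` gives this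
for every `j` since `σⱼ² / φⱼ ≤ σ_max(Φ_u⁻¹ D_u²)`.
-/

namespace Matrix

section Field

variable {n K : Type*} [Fintype n] [DecidableEq n] [Field K]

theorem mem_spectrum_iff_exists_mulVec_eq_smul {A : Matrix n n K} {t : K} :
    t ∈ spectrum K A ↔ ∃ w ≠ 0, A *ᵥ w = t • w := by
  rw [← spectrum_toLin', ← Module.End.hasEigenvalue_iff_mem_spectrum]
  constructor
  · intro h
    obtain ⟨w, hw⟩ := h.exists_hasEigenvector
    exact ⟨w, hw.2, by simpa using hw.apply_eq_smul⟩
  · rintro ⟨w, hw0, hw⟩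
    exact Module.End.hasEigenvalue_of_hasEigenvector
      (Module.End.hasEigenvector_iff.mpr ⟨by simpa [Module.End.mem_eigenspace_iff] using hw, hw0⟩)

theorem inv_diagonal_of_ne_zero {v : n → K} (hv : ∀ j, v j ≠ 0) :
    (diagonal v)⁻¹ = diagonal fun j => (v j)⁻¹ :=
  inv_eq_right_inv <| by simp [hv]

end Field

section CommRing

variable {l m n R : Type*} [CommRing R]

theorem diagonal_add_smul_one [DecidableEq n] (d : n → R) (c : R) :
    diagonal d + c • (1 : Matrix n n R) = diagonal fun j => d j + c := by
  rw [smul_one_eq_diagonal, diagonal_add]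

theorem vec_dotProduct_one_kronecker_mulVec_vec [Fintype m] [Fintype n] [DecidableEq m]
    (B : Matrix n m R) (M : Matrix n n R) : vec B ⬝ᵥ ((1 ⊗ₖ M) *ᵥ vec B) = (B * Bᵀ * M).trace := by
  rw [kronecker_mulVec_vec, vec_dotProduct_vec, transpose_one, Matrix.mul_one, trace_mul_comm,
    Matrix.mul_assoc, trace_mul_comm]

theorem trace_diagonal_mul [Fintype n] [DecidableEq n] (g : n → R) (A : Matrix n n R) :
    (diagonal g * A).trace = ∑ j, g j * A j j := by
  simp [trace, diagonal_mul]

theorem trace_mul_diagonal_mul_transpose_mul [Fintype m] [Fintype n] [DecidableEq n]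
    (W : Matrix m n R) (g : n → R) (A : Matrix m m R) :
    (W * diagonal g * Wᵀ * A).trace = ∑ j, g j * (Wᵀ * A * W) j j := by
  rw [Matrix.mul_assoc, trace_mul_comm, ← Matrix.mul_assoc, trace_mul_comm, trace_diagonal_mul]

theorem trace_mul_mul_transpose_of_transpose_mul_self [Fintype m] [Fintype n] [DecidableEq n]
    {W : Matrix m n R} (hW : Wᵀ * W = 1) (X : Matrix n n R) : (W * X * Wᵀ).trace = X.trace := by
  rw [trace_mul_comm, ← Matrix.mul_assoc, hW, Matrix.one_mul]

theorem transpose_submatrix_mul_submatrix_of_injective [Fintype m] [DecidableEq l] [DecidableEq n]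
    {V : Matrix m n R} (hV : Vᵀ * V = 1) {e : l → n} (he : Function.Injective e) :
    (V.submatrix id e)ᵀ * V.submatrix id e = 1 := by
  rw [transpose_submatrix, ← submatrix_mul _ _ _ id _ Function.bijective_id, hV,
    submatrix_one _ he]

end CommRing

open scoped MatrixOrder in
theorem PosSemidef.trace_mul_nonneg {n : Type*} [Fintype n] [DecidableEq n]
    {P Q : Matrix n n ℝ} (hP : P.PosSemidef) (hQ : Q.PosSemidef) : 0 ≤ (P * Q).trace := by
  obtain ⟨B, rfl⟩ := CStarAlgebra.nonneg_iff_eq_star_mul_self.mp hP.nonneg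
  rw [star_eq_conjTranspose, Matrix.mul_assoc, trace_mul_comm]
  exact (hQ.mul_mul_conjTranspose_same B).trace_nonneg

section MaxEig

variable {m : ℕ}

theorem maxEig_eq_sSup_spectrum (A : Matrix (Fin m) (Fin m) ℝ) :
    maxEig A = sSup (spectrum ℝ A) := by
  rw [maxEig]
  congr 1 with t
  exact mem_spectrum_iff_exists_mulVec_eq_smul.symm

theorem le_maxEig_of_mem_spectrum {A : Matrix (Fin m) (Fin m) ℝ} {t : ℝ}
    (ht : t ∈ spectrum ℝ A) : t ≤ maxEig A :=
  maxEig_eq_sSup_spectrum A ▸ le_csSup (finite_spectrum A).bddAbove ht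

theorem le_maxEig_diagonal (d : Fin m → ℝ) (j : Fin m) : d j ≤ maxEig (diagonal d) :=
  le_maxEig_of_mem_spectrum (by simp)

open scoped MatrixOrder in
theorem IsHermitian.posSemidef_maxEig_smul_one_sub {A : Matrix (Fin m) (Fin m) ℝ}
    (hA : A.IsHermitian) : (maxEig A • 1 - A).PosSemidef := by
  have := le_algebraMap_of_spectrum_le (fun _ => le_maxEig_of_mem_spectrum) hA.isSelfAdjoint
  rwa [Algebra.algebraMap_eq_smul_one] at this

theorem trace_mul_le_maxEig_mul_trace {A M : Matrix (Fin m) (Fin m) ℝ} (hA : A.IsHermitian)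
    (hM : M.PosSemidef) : (A * M).trace ≤ maxEig A * M.trace := by
  have := hA.posSemidef_maxEig_smul_one_sub.trace_mul_nonneg hM
  rwa [Matrix.sub_mul, trace_sub, smul_mul_assoc, Matrix.one_mul, trace_smul, smul_eq_mul,
    sub_nonneg] at this

end MaxEig

end Matrix

theorem egreg_weight_lt_niece_weight {T s f lam c : ℝ} (hT : 0 < T) (hs : s ≠ 0) (hf : 0 < f)
    (hlam : 0 < lam) (hsmall : lam * c * (s ^ 2 / f) < T) :
    T * (f ^ 2 / (s ^ 2 * (f + lam) ^ 2)) + lam ^ 2 * c / (f + lam) ^ 2 < T / s ^ 2 := by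
  have hsmall' : lam * c * s ^ 2 < T * f := by
    have := mul_lt_mul_of_pos_right hsmall hf
    rwa [mul_assoc, div_mul_cancel₀ _ hf.ne'] at this
  have hfl : 0 < f + lam := add_pos hf hlam
  calc T * (f ^ 2 / (s ^ 2 * (f + lam) ^ 2)) + lam ^ 2 * c / (f + lam) ^ 2
      = (T * f ^ 2 + lam * (lam * c * s ^ 2)) / (s ^ 2 * (f + lam) ^ 2) := by
        field_simp
    _ < T * (f + lam) ^ 2 / (s ^ 2 * (f + lam) ^ 2) := by
        gcongr
        nlinarith [mul_lt_mul_of_pos_left hsmall' hlam, mul_pos (mul_pos hT hf) hlam,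
          mul_pos hT (mul_pos hlam hlam)]
    _ = T / s ^ 2 := by field_simp

section Risk

variable {p q u : ℕ} {W : Matrix (Fin p) (Fin u) ℝ} {Sx : Matrix (Fin p) (Fin p) ℝ}
  {Se : Matrix (Fin q) (Fin q) ℝ} {β : Matrix (Fin p) (Fin q) ℝ}

theorem vecM_eq_vec : vecM β = vec β := rfl

theorem RN_self {D : Matrix (Fin u) (Fin u) ℝ} :
    RN W D W Sx Se β = Se.trace * (W * (D ^ 2)⁻¹ * Wᵀ * Sx).trace := by
  simp [RN]

theorem trace_mul_inv_diagonal_sq_mul {s : Fin u → ℝ} (hs : ∀ j, s j ≠ 0) :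
    (W * (diagonal s ^ 2)⁻¹ * Wᵀ * Sx).trace = ∑ j, (Wᵀ * Sx * W) j j / s j ^ 2 := by
  rw [diagonal_pow, inv_diagonal_of_ne_zero (v := s ^ 2) (fun j => pow_ne_zero 2 (hs j)),
    trace_mul_diagonal_mul_transpose_mul]
  simp [div_eq_inv_mul]

theorem vecM_dotProduct_kronecker_mulVec_le (hW : Wᵀ * W = 1) (hSx : Sx.PosSemidef)
    (g : Fin u → ℝ) :
    vecM β ⬝ᵥ ((1 ⊗ₖ (W * diagonal g * Wᵀ * Sx * W * diagonal g * Wᵀ)) *ᵥ vecM β) ≤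
      maxEig (β * βᵀ) * ∑ j, g j ^ 2 * (Wᵀ * Sx * W) j j := by
  set N := W * diagonal g * Wᵀ
  have hNSxN : (N * Sx * N).PosSemidef := by
    simpa [N, transpose_mul, Matrix.mul_assoc] using hSx.mul_mul_conjTranspose_same N
  have htrace : (N * Sx * N).trace = ∑ j, g j ^ 2 * (Wᵀ * Sx * W) j j := by
    rw [show N * Sx * N = W * (diagonal g * (Wᵀ * Sx * W) * diagonal g) * Wᵀ by
        simp only [N, Matrix.mul_assoc],
      trace_mul_mul_transpose_of_transpose_mul_self hW, trace_mul_comm, ← Matrix.mul_assoc,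
      diagonal_mul_diagonal, trace_diagonal_mul]
    simp only [sq]
  rw [show W * diagonal g * Wᵀ * Sx * W * diagonal g * Wᵀ = N * Sx * N by
      simp only [N, Matrix.mul_assoc],
    vecM_eq_vec, vec_dotProduct_one_kronecker_mulVec_vec, ← htrace]
  exact trace_mul_le_maxEig_mul_trace (isHermitian_mul_conjTranspose_self β) hNSxN

theorem RE_diagonal_le (hW : Wᵀ * W = 1) (hSx : Sx.PosSemidef) {s f : Fin u → ℝ} {lam : ℝ}
    (hs : ∀ j, s j ≠ 0) (hf : ∀ j, f j + lam ≠ 0) :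
    RE W (diagonal s) (diagonal f) Sx Se β lam ≤
      ∑ j, (Se.trace * (f j ^ 2 / (s j ^ 2 * (f j + lam) ^ 2))
        + lam ^ 2 * maxEig (β * βᵀ) / (f j + lam) ^ 2) * (Wᵀ * Sx * W) j j := by
  have hvariance : (W * (diagonal (s ^ 2))⁻¹ * diagonal (f ^ 2)
      * (diagonal ((fun j => f j + lam) ^ 2))⁻¹ * Wᵀ * Sx).trace
      = ∑ j, f j ^ 2 / (s j ^ 2 * (f j + lam) ^ 2) * (Wᵀ * Sx * W) j j := by
    rw [inv_diagonal_of_ne_zero (v := s ^ 2) (fun j => pow_ne_zero 2 (hs j)),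
      inv_diagonal_of_ne_zero (v := (fun j => f j + lam) ^ 2) (fun j => pow_ne_zero 2 (hf j)),
      Matrix.mul_assoc W, diagonal_mul_diagonal, Matrix.mul_assoc W, diagonal_mul_diagonal,
      trace_mul_diagonal_mul_transpose_mul]
    congr 1 with j
    simp only [Pi.pow_apply, div_eq_mul_inv, mul_inv]
    ring
  rw [RE, diagonal_add_smul_one, diagonal_pow, diagonal_pow, diagonal_pow, hvariance,
    inv_diagonal_of_ne_zero hf]
  calc _ ≤ Se.trace * ∑ j, f j ^ 2 / (s j ^ 2 * (f j + lam) ^ 2) * (Wᵀ * Sx * W) j j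
        + lam ^ 2 * (maxEig (β * βᵀ) * ∑ j, (f j + lam)⁻¹ ^ 2 * (Wᵀ * Sx * W) j j) := by
        gcongr
        exact vecM_dotProduct_kronecker_mulVec_le hW hSx _
    _ = _ := by
      rw [Finset.mul_sum, Finset.mul_sum, Finset.mul_sum, ← Finset.sum_add_distrib]
      congr 1 with j
      rw [inv_pow]
      ring

theorem RE_diagonal_lt_RN (hu : 0 < u) (hW : Wᵀ * W = 1) (hSx : Sx.PosDef) {s f : Fin u → ℝ}
    {lam : ℝ} (hs : ∀ j, 0 < s j) (hf : ∀ j, 0 < f j) (hT : 0 < Se.trace) (hlam : 0 < lam)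
    (hsmall : ∀ j, lam * maxEig (β * βᵀ) * (s j ^ 2 / f j) < Se.trace) :
    RE W (diagonal s) (diagonal f) Sx Se β lam < RN W (diagonal s) W Sx Se β := by
  have hinj : Function.Injective W.mulVec := fun x y hxy => by
    simpa [mulVec_mulVec, hW] using congrArg (Wᵀ *ᵥ ·) hxy
  have hS : (Wᵀ * Sx * W).PosDef := by
    simpa [conjTranspose_eq_transpose_of_trivial] using hSx.conjTranspose_mul_mul_same hinj
  calc _ ≤ _ := RE_diagonal_le hW hSx.posSemidef (fun j => (hs j).ne')
          (fun j => (add_pos (hf j) hlam).ne')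
    _ < ∑ j, Se.trace / s j ^ 2 * (Wᵀ * Sx * W) j j :=
      Finset.sum_lt_sum_of_nonempty (Finset.univ_nonempty_iff.mpr ⟨⟨0, hu⟩⟩) fun j _ =>
        mul_lt_mul_of_pos_right
          (egreg_weight_lt_niece_weight hT (hs j).ne' (hf j) hlam (hsmall j)) hS.diag_pos
    _ = _ := by
      rw [RN_self, trace_mul_inv_diagonal_sq_mul (fun j => (hs j).ne'), Finset.mul_sum]
      congr 1 with j
      ring

end Risk

theorem egreg_risk_lt_niece_risk_for_small_lambda_general
    (p q r : ℕ)
    (V : Matrix (Fin p) (Fin r) ℝ) (σ : Fin r → ℝ)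
    (hV : Vᵀ * V = 1)
    (hσpos : ∀ j, 0 < σ j)
    (π : Equiv.Perm (Fin r)) (φ : Fin r → ℝ)
    (hφpos : ∀ j, 0 < φ j)
    (Sx : Matrix (Fin p) (Fin p) ℝ) (hSx : Sx.PosDef)
    (Se : Matrix (Fin q) (Fin q) ℝ) (hSetr : 0 < Se.trace)
    (β : Matrix (Fin p) (Fin q) ℝ) :
    ∀ u : ℕ, 1 ≤ u → ∀ hu : u ≤ r, ∀ lam : ℝ, 0 < lam →
      lam < Se.trace / (maxEig (β * βᵀ) *
        maxEig ((Matrix.diagonal (fun j : Fin u => φ (Fin.castLE hu j)))⁻¹ *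
          (Matrix.diagonal (fun j : Fin u => σ (π (Fin.castLE hu j)))) ^ 2)) →
      RE (V.submatrix id (fun j : Fin u => π (Fin.castLE hu j)))
         (Matrix.diagonal (fun j : Fin u => σ (π (Fin.castLE hu j))))
         (Matrix.diagonal (fun j : Fin u => φ (Fin.castLE hu j)))
         Sx Se β lam
      < RN (V.submatrix id (fun j : Fin u => π (Fin.castLE hu j)))
           (Matrix.diagonal (fun j : Fin u => σ (π (Fin.castLE hu j))))
           (V.submatrix id (fun j : Fin u => π (Fin.castLE hu j)))
           Sx Se β
      ∧ RN (V.submatrix id (fun j : Fin u => π (Fin.castLE hu j)))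
           (Matrix.diagonal (fun j : Fin u => σ (π (Fin.castLE hu j))))
           (V.submatrix id (fun j : Fin u => π (Fin.castLE hu j)))
           Sx Se β
        = Se.trace * ((V.submatrix id (fun j : Fin u => π (Fin.castLE hu j))) *
            ((Matrix.diagonal (fun j : Fin u => σ (π (Fin.castLE hu j)))) ^ 2)⁻¹ *
            (V.submatrix id (fun j : Fin u => π (Fin.castLE hu j)))ᵀ * Sx).trace := by
  intro u hu1 hu lam hlam hlt
  set s : Fin u → ℝ := fun j => σ (π (Fin.castLE hu j))
  set f : Fin u → ℝ := fun j => φ (Fin.castLE hu j)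
  have hratio : (diagonal f)⁻¹ * diagonal s ^ 2 = diagonal fun j => s j ^ 2 / f j := by
    rw [inv_diagonal_of_ne_zero fun j => (hφpos _).ne', diagonal_pow, diagonal_mul_diagonal]
    exact congrArg diagonal (funext fun j => (div_eq_inv_mul _ _).symm)
  rw [hratio] at hlt
  set c := maxEig (β * βᵀ)
  set m := maxEig (diagonal fun j => s j ^ 2 / f j)
  have hm : 0 < m := (div_pos (pow_pos (hσpos _) 2) (hφpos _)).trans_le
    (le_maxEig_diagonal (fun j => s j ^ 2 / f j) ⟨0, hu1⟩)
  -- `x / 0 = 0` in Lean, so the bound on `lam` forces `c * m > 0`.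
  have hcm : 0 < c * m := (div_pos_iff_of_pos_left hSetr).mp (hlam.trans hlt)
  have hc : 0 < c := pos_of_mul_pos_left hcm hm.le
  have hsmall : ∀ j, lam * c * (s j ^ 2 / f j) < Se.trace := fun j =>
    calc lam * c * (s j ^ 2 / f j) ≤ lam * (c * m) := by
          rw [mul_assoc]; gcongr; exact le_maxEig_diagonal (fun j => s j ^ 2 / f j) j
      _ < Se.trace := (lt_div_iff₀ hcm).mp hlt
  have hW := transpose_submatrix_mul_submatrix_of_injective hV
    (π.injective.comp (Fin.castLE_injective hu))
  exact ⟨RE_diagonal_lt_RN hu1 hW hSx (fun _ => hσpos _) (fun _ => hφpos _) hSetr hlam hsmall,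
    RN_self⟩

theorem egreg_risk_lt_niece_risk_for_small_lambda
    (n p q r : ℕ) (hr : 0 < r)
    (X : Matrix (Fin n) (Fin p) ℝ)
    (U : Matrix (Fin n) (Fin r) ℝ) (V : Matrix (Fin p) (Fin r) ℝ) (σ : Fin r → ℝ)
    (hrank : X.rank = r)
    (hSVD : X = U * Matrix.diagonal σ * Vᵀ)
    (hU : Uᵀ * U = 1) (hV : Vᵀ * V = 1)
    (hσpos : ∀ j, 0 < σ j) (hσanti : Antitone σ)
    (π : Equiv.Perm (Fin r)) (φ : Fin r → ℝ)
    (hφpos : ∀ j, 0 < φ j) (hφanti : Antitone φ)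
    (Sx : Matrix (Fin p) (Fin p) ℝ) (hSx : Sx.PosDef) (hSxsymm : Sx.IsSymm)
    (Se : Matrix (Fin q) (Fin q) ℝ) (hSe : Se.PosSemidef) (hSetr : 0 < Se.trace)
    (β : Matrix (Fin p) (Fin q) ℝ) (hβ : β ≠ 0) :
    ∀ u : ℕ, 1 ≤ u → ∀ hu : u ≤ r, ∀ lam : ℝ, 0 < lam →
      lam < Se.trace / (maxEig (β * βᵀ) *
        maxEig ((Matrix.diagonal (fun j : Fin u => φ (Fin.castLE hu j)))⁻¹ *
          (Matrix.diagonal (fun j : Fin u => σ (π (Fin.castLE hu j)))) ^ 2)) →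
      RE (V.submatrix id (fun j : Fin u => π (Fin.castLE hu j)))
         (Matrix.diagonal (fun j : Fin u => σ (π (Fin.castLE hu j))))
         (Matrix.diagonal (fun j : Fin u => φ (Fin.castLE hu j)))
         Sx Se β lam
      < RN (V.submatrix id (fun j : Fin u => π (Fin.castLE hu j)))
           (Matrix.diagonal (fun j : Fin u => σ (π (Fin.castLE hu j))))
           (V.submatrix id (fun j : Fin u => π (Fin.castLE hu j)))
           Sx Se β
      ∧ RN (V.submatrix id (fun j : Fin u => π (Fin.castLE hu j)))
           (Matrix.diagonal (fun j : Fin u => σ (π (Fin.castLE hu j))))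
           (V.submatrix id (fun j : Fin u => π (Fin.castLE hu j)))
           Sx Se β
        = Se.trace * ((V.submatrix id (fun j : Fin u => π (Fin.castLE hu j))) *
            ((Matrix.diagonal (fun j : Fin u => σ (π (Fin.castLE hu j)))) ^ 2)⁻¹ *
            (V.submatrix id (fun j : Fin u => π (Fin.castLE hu j)))ᵀ * Sx).trace :=
  egreg_risk_lt_niece_risk_for_small_lambda_general p q r V σ hV hσpos π φ hφpos Sx hSx Se hSetr β
end

section
/- For every d with 1 ≤ d ≤ r and every λ > 0, the function λ ↦ R_E(d, λ) is differentiable and its derivative satisfies d/dλ R_E(d, λ) = −2 tr(Σ_ε)·tr(V_d' Σ_x V_d D_d^{-2} Φ_d² (Φ_d + λ I_d)^{-3}) + 2λ·tr(β* β*' V_d Φ_d (Φ_d + λ I_d)^{-2} V_d' Σ_x V_d (Φ_d + λ I_d)^{-1} V_d'). -/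
/-!
Since `Φ_d` is diagonal, so are `D_d⁻²` and `(Φ_d + λ I)⁻¹`; the Kronecker form equals
`tr(β*' K β*)`, and cycling traces turns the risk into
`tr(Σ_ε) · tr(M G(λ)) + tr(N B(λ) M B(λ))` with `M = V_d' Σ_x V_d`, `N = V_d' β* β*' V_d` and the
diagonal matrices `G(λ) = D_d⁻² Φ_d² (Φ_d + λ I)⁻²`, `B(λ) = λ (Φ_d + λ I)⁻¹`. Both terms are
differentiated entrywise. As `M` and `N` are symmetric, the two product-rule terms of
`tr(N B M B)` have the same trace, giving `2 tr(N B' M B)` with `B' = Φ_d (Φ_d + λ I)⁻²`.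
-/

open Matrix
open scoped Kronecker

namespace Matrix

variable {ι : Type*}

theorem IsSymm.transpose_mul_mul_same {m R : Type*} [Fintype m] [CommSemiring R]
    {S : Matrix m m R} (hS : S.IsSymm) (A : Matrix m ι R) : (Aᵀ * S * A).IsSymm := by
  simp only [IsSymm, transpose_mul, transpose_transpose, hS.eq, Matrix.mul_assoc]

variable [DecidableEq ι]

theorem diagonal_add_smul_one_s4 {R : Type*} [Semiring R] (v : ι → R) (l : R) :
    diagonal v + l • (1 : Matrix ι ι R) = diagonal fun i => v i + l := by
  rw [smul_one_eq_diagonal, diagonal_add]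

theorem diagonal_div_add_eq_smul_inv {K : Type*} [Field K] (v : ι → K) (l : K) :
    (diagonal fun i => l / (v i + l)) = l • diagonal (fun i => v i + l)⁻¹ := by
  rw [← diagonal_smul]
  simp only [Pi.smul_def, Pi.inv_apply, smul_eq_mul, div_eq_mul_inv]

variable [Fintype ι]

theorem inv_diagonal_of_ne_zero_s4 {K : Type*} [Field K] {v : ι → K} (hv : ∀ i, v i ≠ 0) :
    (diagonal v)⁻¹ = diagonal v⁻¹ := by
  refine inv_eq_right_inv ?_
  rw [diagonal_mul_diagonal, ← diagonal_one]
  exact congrArg diagonal (funext fun i => mul_inv_cancel₀ (hv i))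

variable {R : Type*} [CommSemiring R]

theorem trace_mul_diagonal (M : Matrix ι ι R) (w : ι → R) :
    (M * diagonal w).trace = ∑ i, M i i * w i := by
  simp [trace, mul_diagonal]

theorem trace_mul_diagonal_mul_mul_diagonal (N M : Matrix ι ι R) (a b : ι → R) :
    (N * diagonal a * M * diagonal b).trace = ∑ i, ∑ j, N i j * a j * M j i * b i := by
  simp only [trace_mul_diagonal, mul_apply (M := N * diagonal a), mul_diagonal, Finset.sum_mul]

theorem trace_mul_diagonal_mul_mul_diagonal_comm {N M : Matrix ι ι R} (hN : N.IsSymm)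
    (hM : M.IsSymm) (a b : ι → R) :
    (N * diagonal a * M * diagonal b).trace = (N * diagonal b * M * diagonal a).trace := by
  rw [← trace_transpose]
  simp only [transpose_mul, diagonal_transpose, hN.eq, hM.eq]
  simp only [← Matrix.mul_assoc]
  rw [trace_mul_comm]
  simp only [Matrix.mul_assoc]

theorem hasDerivAt_trace_mul_diagonal (M : Matrix ι ι ℝ) {w : ℝ → ι → ℝ} {w' : ι → ℝ} {x : ℝ}
    (hw : HasDerivAt w w' x) :
    HasDerivAt (fun l => (M * diagonal (w l)).trace) (M * diagonal w').trace x := by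
  simp only [trace_mul_diagonal]
  exact HasDerivAt.fun_sum fun i _ => (hasDerivAt_pi.1 hw i).const_mul (M i i)

theorem hasDerivAt_trace_mul_diagonal_mul_mul_diagonal {N M : Matrix ι ι ℝ} (hN : N.IsSymm)
    (hM : M.IsSymm) {b : ℝ → ι → ℝ} {b' : ι → ℝ} {x : ℝ} (hb : HasDerivAt b b' x) :
    HasDerivAt (fun l => (N * diagonal (b l) * M * diagonal (b l)).trace)
      (2 * (N * diagonal b' * M * diagonal (b x)).trace) x := by
  have hprod := HasDerivAt.fun_sum fun i (_ : i ∈ Finset.univ) =>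
    HasDerivAt.fun_sum fun j (_ : j ∈ Finset.univ) =>
      (((hasDerivAt_pi.1 hb j).const_mul (N i j)).mul_const (M j i)).fun_mul
        (hasDerivAt_pi.1 hb i)
  rw [two_mul]
  nth_rw 2 [trace_mul_diagonal_mul_mul_diagonal_comm hN hM]
  simp only [trace_mul_diagonal_mul_mul_diagonal, ← Finset.sum_add_distrib]
  exact hprod

end Matrix

theorem hasDerivAt_div_add_sq (c a x : ℝ) (h : a + x ≠ 0) :
    HasDerivAt (fun l => c / (a + l) ^ 2) (-2 * c / (a + x) ^ 3) x :=
  ((hasDerivAt_const x c).fun_div ((hasDerivAt_id' x).const_add a |>.fun_pow 2)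
    (pow_ne_zero 2 h)).congr_deriv (by field_simp; ring)

theorem hasDerivAt_div_add_self (a x : ℝ) (h : a + x ≠ 0) :
    HasDerivAt (fun l => l / (a + l)) (a / (a + x) ^ 2) x :=
  ((hasDerivAt_id' x).fun_div ((hasDerivAt_id' x).const_add a) h).congr_deriv (by ring)

theorem vecM_dotProduct_one_kronecker_mulVec {p q : ℕ} (β : Matrix (Fin p) (Fin q) ℝ)
    (K : Matrix (Fin p) (Fin p) ℝ) :
    vecM β ⬝ᵥ ((1 : Matrix (Fin q) (Fin q) ℝ) ⊗ₖ K).mulVec (vecM β) = (βᵀ * K * β).trace := by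
  rw [show vecM β = vec β from rfl, ← vec_mul_eq_mulVec, vec_dotProduct_vec, Matrix.mul_assoc]

section Risk

variable {p q d : ℕ} (Vd : Matrix (Fin p) (Fin d) ℝ) {σ φ : Fin d → ℝ}
  (Sx : Matrix (Fin p) (Fin p) ℝ) (Se : Matrix (Fin q) (Fin q) ℝ) (β : Matrix (Fin p) (Fin q) ℝ)
  {l : ℝ}

theorem RE_diagonal_eq (hσ : ∀ j, σ j ≠ 0) (hφl : ∀ j, φ j + l ≠ 0) :
    RE Vd (diagonal σ) (diagonal φ) Sx Se β l =
      Se.trace * (Vdᵀ * Sx * Vd * diagonal fun j => (φ j / σ j) ^ 2 / (φ j + l) ^ 2).trace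
      + (Vdᵀ * (β * βᵀ) * Vd * diagonal (fun j => l / (φ j + l)) * (Vdᵀ * Sx * Vd) *
          diagonal fun j => l / (φ j + l)).trace := by
  have hσ2 : ∀ j, (σ ^ 2) j ≠ 0 := fun j => pow_ne_zero 2 (hσ j)
  have hφl2 : ∀ j, ((fun i => φ i + l) ^ 2 : Fin d → ℝ) j ≠ 0 := fun j => pow_ne_zero 2 (hφl j)
  rw [RE, diagonal_add_smul_one_s4, diagonal_pow, diagonal_pow, diagonal_pow,
    inv_diagonal_of_ne_zero_s4 hσ2, inv_diagonal_of_ne_zero_s4 hφl2, inv_diagonal_of_ne_zero_s4 hφl,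
    vecM_dotProduct_one_kronecker_mulVec]
  congr 1
  · rw [Matrix.mul_assoc Vd, diagonal_mul_diagonal, Matrix.mul_assoc Vd, diagonal_mul_diagonal,
      Matrix.mul_assoc (Vd * _), trace_mul_comm]
    simp only [Matrix.mul_assoc]
    congr 5
    funext j
    simp only [Pi.inv_apply, Pi.pow_apply]
    field_simp
  · rw [diagonal_div_add_eq_smul_inv, trace_mul_cycle]
    simp only [Matrix.mul_smul, Matrix.smul_mul, trace_smul, smul_smul, smul_eq_mul,
      ← Matrix.mul_assoc]
    rw [trace_mul_comm]
    simp only [Matrix.mul_assoc]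
    ring

theorem RE_deriv_diagonal_eq (hσ : ∀ j, σ j ≠ 0) (hφl : ∀ j, φ j + l ≠ 0) :
    -2 * Se.trace * (Vdᵀ * Sx * Vd * ((diagonal σ) ^ 2)⁻¹ * (diagonal φ) ^ 2 *
        ((diagonal φ + l • 1) ^ 3)⁻¹).trace
      + 2 * l * (β * βᵀ * Vd * diagonal φ * ((diagonal φ + l • 1) ^ 2)⁻¹ * Vdᵀ * Sx * Vd *
        (diagonal φ + l • 1)⁻¹ * Vdᵀ).trace =
      Se.trace * (Vdᵀ * Sx * Vd * diagonal fun j => -2 * (φ j / σ j) ^ 2 / (φ j + l) ^ 3).trace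
      + 2 * (Vdᵀ * (β * βᵀ) * Vd * diagonal (fun j => φ j / (φ j + l) ^ 2) * (Vdᵀ * Sx * Vd) *
          diagonal fun j => l / (φ j + l)).trace := by
  have hσ2 : ∀ j, (σ ^ 2) j ≠ 0 := fun j => pow_ne_zero 2 (hσ j)
  have hφl2 : ∀ j, ((fun i => φ i + l) ^ 2 : Fin d → ℝ) j ≠ 0 := fun j => pow_ne_zero 2 (hφl j)
  have hφl3 : ∀ j, ((fun i => φ i + l) ^ 3 : Fin d → ℝ) j ≠ 0 := fun j => pow_ne_zero 3 (hφl j)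
  rw [diagonal_add_smul_one_s4, diagonal_pow, diagonal_pow, diagonal_pow, diagonal_pow,
    inv_diagonal_of_ne_zero_s4 hσ2, inv_diagonal_of_ne_zero_s4 hφl2, inv_diagonal_of_ne_zero_s4 hφl3,
    inv_diagonal_of_ne_zero_s4 hφl]
  congr 1
  · rw [Matrix.mul_assoc _ (diagonal _), diagonal_mul_diagonal, Matrix.mul_assoc _ (diagonal _),
      diagonal_mul_diagonal, trace_mul_diagonal, trace_mul_diagonal, Finset.mul_sum,
      Finset.mul_sum]
    refine Finset.sum_congr rfl fun j _ => ?_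
    simp only [Pi.inv_apply, Pi.pow_apply]
    field_simp
  · rw [diagonal_div_add_eq_smul_inv, Matrix.mul_assoc _ (diagonal φ), diagonal_mul_diagonal,
      Matrix.mul_smul, trace_smul, smul_eq_mul, trace_mul_comm _ Vdᵀ]
    simp only [Matrix.mul_assoc, Pi.inv_apply, Pi.pow_apply, ← div_eq_mul_inv, mul_assoc]

theorem hasDerivAt_RE_diagonal {lam : ℝ} (hSx : Sx.IsSymm) (hσ : ∀ j, σ j ≠ 0)
    (hφ : ∀ j, 0 < φ j) (hlam : 0 < lam) :
    HasDerivAt (fun l => RE Vd (diagonal σ) (diagonal φ) Sx Se β l)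
      (-2 * Se.trace * (Vdᵀ * Sx * Vd * ((diagonal σ) ^ 2)⁻¹ * (diagonal φ) ^ 2 *
          ((diagonal φ + lam • 1) ^ 3)⁻¹).trace
        + 2 * lam * (β * βᵀ * Vd * diagonal φ * ((diagonal φ + lam • 1) ^ 2)⁻¹ * Vdᵀ * Sx * Vd *
          (diagonal φ + lam • 1)⁻¹ * Vdᵀ).trace) lam := by
  have hφl : ∀ l, 0 < l → ∀ j, φ j + l ≠ 0 := fun l hl j => (add_pos (hφ j) hl).ne'
  have hnoise : HasDerivAt (fun l j => (φ j / σ j) ^ 2 / (φ j + l) ^ 2)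
      (fun j => -2 * (φ j / σ j) ^ 2 / (φ j + lam) ^ 3) lam :=
    hasDerivAt_pi.2 fun j => hasDerivAt_div_add_sq _ _ _ (hφl lam hlam j)
  have hshrink : HasDerivAt (fun l j => l / (φ j + l)) (fun j => φ j / (φ j + lam) ^ 2) lam :=
    hasDerivAt_pi.2 fun j => hasDerivAt_div_add_self _ _ (hφl lam hlam j)
  have hββ : (β * βᵀ).IsSymm := by rw [IsSymm, transpose_mul, transpose_transpose]
  rw [RE_deriv_diagonal_eq Vd Sx Se β hσ (hφl lam hlam)]
  refine (((hasDerivAt_trace_mul_diagonal _ hnoise).const_mul Se.trace).add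
    (hasDerivAt_trace_mul_diagonal_mul_mul_diagonal (hββ.transpose_mul_mul_same Vd)
      (hSx.transpose_mul_mul_same Vd) hshrink)).congr_of_eventuallyEq ?_
  filter_upwards [Ioi_mem_nhds hlam] with l hl
  exact RE_diagonal_eq Vd Sx Se β hσ (hφl l hl)

end Risk

theorem egreg_risk_hasDerivAt_general
    (p q r : ℕ)
    (V : Matrix (Fin p) (Fin r) ℝ) (σ : Fin r → ℝ)
    (hσpos : ∀ j, 0 < σ j)
    (π : Equiv.Perm (Fin r)) (φ : Fin r → ℝ)
    (hφpos : ∀ j, 0 < φ j)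
    (Sx : Matrix (Fin p) (Fin p) ℝ) (hSxsymm : Sx.IsSymm)
    (Se : Matrix (Fin q) (Fin q) ℝ)
    (β : Matrix (Fin p) (Fin q) ℝ)
    (d : ℕ) (hdr : d ≤ r) (lam : ℝ) (hlam : 0 < lam) :
    HasDerivAt
      (fun l : ℝ =>
        RE (V.submatrix id (fun j : Fin d => π (Fin.castLE hdr j)))
           (Matrix.diagonal (fun j : Fin d => σ (π (Fin.castLE hdr j))))
           (Matrix.diagonal (fun j : Fin d => φ (Fin.castLE hdr j)))
           Sx Se β l)
      (-2 * Se.trace *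
          ((V.submatrix id (fun j : Fin d => π (Fin.castLE hdr j)))ᵀ * Sx *
            (V.submatrix id (fun j : Fin d => π (Fin.castLE hdr j))) *
            ((Matrix.diagonal (fun j : Fin d => σ (π (Fin.castLE hdr j)))) ^ 2)⁻¹ *
            (Matrix.diagonal (fun j : Fin d => φ (Fin.castLE hdr j))) ^ 2 *
            (((Matrix.diagonal (fun j : Fin d => φ (Fin.castLE hdr j))) + lam • 1) ^ 3)⁻¹).trace
        + 2 * lam *
          (β * βᵀ * (V.submatrix id (fun j : Fin d => π (Fin.castLE hdr j))) *
            (Matrix.diagonal (fun j : Fin d => φ (Fin.castLE hdr j))) *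
            (((Matrix.diagonal (fun j : Fin d => φ (Fin.castLE hdr j))) + lam • 1) ^ 2)⁻¹ *
            (V.submatrix id (fun j : Fin d => π (Fin.castLE hdr j)))ᵀ * Sx *
            (V.submatrix id (fun j : Fin d => π (Fin.castLE hdr j))) *
            ((Matrix.diagonal (fun j : Fin d => φ (Fin.castLE hdr j))) + lam • 1)⁻¹ *
            (V.submatrix id (fun j : Fin d => π (Fin.castLE hdr j)))ᵀ).trace)
      lam :=
  hasDerivAt_RE_diagonal _ Sx Se β hSxsymm (fun _ => (hσpos _).ne') (fun _ => hφpos _) hlam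

theorem egreg_risk_hasDerivAt
    (n p q r : ℕ) (hr : 0 < r)
    (X : Matrix (Fin n) (Fin p) ℝ)
    (U : Matrix (Fin n) (Fin r) ℝ) (V : Matrix (Fin p) (Fin r) ℝ) (σ : Fin r → ℝ)
    (hrank : X.rank = r)
    (hSVD : X = U * Matrix.diagonal σ * Vᵀ)
    (hU : Uᵀ * U = 1) (hV : Vᵀ * V = 1)
    (hσpos : ∀ j, 0 < σ j) (hσanti : Antitone σ)
    (π : Equiv.Perm (Fin r)) (φ : Fin r → ℝ)
    (hφpos : ∀ j, 0 < φ j) (hφanti : Antitone φ)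
    (Sx : Matrix (Fin p) (Fin p) ℝ) (hSx : Sx.PosDef) (hSxsymm : Sx.IsSymm)
    (Se : Matrix (Fin q) (Fin q) ℝ) (hSe : Se.PosSemidef)
    (β : Matrix (Fin p) (Fin q) ℝ)
    (d : ℕ) (hd1 : 1 ≤ d) (hdr : d ≤ r) (lam : ℝ) (hlam : 0 < lam) :
    HasDerivAt
      (fun l : ℝ =>
        RE (V.submatrix id (fun j : Fin d => π (Fin.castLE hdr j)))
           (Matrix.diagonal (fun j : Fin d => σ (π (Fin.castLE hdr j))))
           (Matrix.diagonal (fun j : Fin d => φ (Fin.castLE hdr j)))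
           Sx Se β l)
      (-2 * Se.trace *
          ((V.submatrix id (fun j : Fin d => π (Fin.castLE hdr j)))ᵀ * Sx *
            (V.submatrix id (fun j : Fin d => π (Fin.castLE hdr j))) *
            ((Matrix.diagonal (fun j : Fin d => σ (π (Fin.castLE hdr j)))) ^ 2)⁻¹ *
            (Matrix.diagonal (fun j : Fin d => φ (Fin.castLE hdr j))) ^ 2 *
            (((Matrix.diagonal (fun j : Fin d => φ (Fin.castLE hdr j))) + lam • 1) ^ 3)⁻¹).trace
        + 2 * lam *
          (β * βᵀ * (V.submatrix id (fun j : Fin d => π (Fin.castLE hdr j))) *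
            (Matrix.diagonal (fun j : Fin d => φ (Fin.castLE hdr j))) *
            (((Matrix.diagonal (fun j : Fin d => φ (Fin.castLE hdr j))) + lam • 1) ^ 2)⁻¹ *
            (V.submatrix id (fun j : Fin d => π (Fin.castLE hdr j)))ᵀ * Sx *
            (V.submatrix id (fun j : Fin d => π (Fin.castLE hdr j))) *
            ((Matrix.diagonal (fun j : Fin d => φ (Fin.castLE hdr j))) + lam • 1)⁻¹ *
            (V.submatrix id (fun j : Fin d => π (Fin.castLE hdr j)))ᵀ).trace)
      lam :=
  egreg_risk_hasDerivAt_general p q r V σ hσpos π φ hφpos Sx hSxsymm Se β d hdr lam hlam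
end

section
/- Suppose S = (1/n) Γ' X' X Γ is invertible, and define the population NIECE estimator β̂^N(ω) = Γ (Γ' X' X Γ)^{-1} Γ' X' Y(ω). Then β̂^N is unbiased, 𝔼[β̂^N] = β*, and its prediction risk equals 𝔼[ tr( (β̂^N − β*)' Σ_x (β̂^N − β*) ) ] = (1/n) · tr(Σ_ε) · tr( S^{-1} ). -/
open Matrix MeasureTheory

/-! With `M = Γᵀ Xᵀ X Γ` and `A = Γ M⁻¹ Γᵀ Xᵀ`, the envelope condition `β = Γ Γᵀ β` gives
`A X β = β`, so `β̂ᴺ - β = A E` is a fixed linear image of mean-zero noise. Uncorrelated rows give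
`𝔼 tr(Eᵀ C E) = tr Σ_ε · tr C`, and `Σ_x Γ = Γ` reduces `C = Aᵀ Σ_x A` to `Kᵀ K` with
`K = M⁻¹ (X Γ)ᵀ`, whose trace is `tr (K Kᵀ) = tr M⁻¹ = n⁻¹ tr S⁻¹`. -/

section WhiteNoise

variable {Ω m : Type*} [MeasurableSpace Ω] {P : Measure Ω} [Fintype m]

lemma integrable_mul_apply {l q : Type*} {E : Ω → Matrix m q ℝ}
    (hint : ∀ i k, Integrable (fun ω => E ω i k) P) (A : Matrix l m ℝ) (i : l) (k : q) :
    Integrable (fun ω => (A * E ω) i k) P := by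
  simp only [mul_apply]
  exact integrable_finsetSum _ fun j _ => (hint j k).const_mul _

lemma integral_mul_apply_eq_zero {l q : Type*} {E : Ω → Matrix m q ℝ}
    (hint : ∀ i k, Integrable (fun ω => E ω i k) P)
    (hmean : ∀ i k, ∫ ω, E ω i k ∂P = 0) (A : Matrix l m ℝ) (i : l) (k : q) :
    ∫ ω, (A * E ω) i k ∂P = 0 := by
  simp only [mul_apply]
  rw [integral_finsetSum _ fun j _ => (hint j k).const_mul _]
  simp [integral_const_mul, hmean]

lemma integral_trace_transpose_mul_mul {q : Type*} [Fintype q] [DecidableEq m]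
    {E : Ω → Matrix m q ℝ} (hL2 : ∀ i k, MemLp (fun ω => E ω i k) 2 P) {V : Matrix q q ℝ}
    (hcov : ∀ i j k l, ∫ ω, E ω i k * E ω j l ∂P = (if i = j then (1:ℝ) else 0) * V k l)
    (C : Matrix m m ℝ) :
    ∫ ω, ((E ω)ᵀ * C * E ω).trace ∂P = V.trace * C.trace := by
  have hint : ∀ i j k, Integrable (fun ω => C i j * (E ω i k * E ω j k)) P := fun i j k =>
    ((hL2 i k).integrable_mul (hL2 j k)).const_mul _
  have htrace : ∀ ω, ((E ω)ᵀ * C * E ω).trace = ∑ k, ∑ i, ∑ j, C i j * (E ω i k * E ω j k) := by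
    intro ω
    simp only [trace, diag, mul_apply, transpose_apply, Finset.sum_mul]
    refine Finset.sum_congr rfl fun k _ => Finset.sum_comm.trans ?_
    exact Finset.sum_congr rfl fun i _ => Finset.sum_congr rfl fun j _ => by ring
  simp_rw [htrace]
  rw [integral_finsetSum _ fun k _ => integrable_finsetSum _ fun i _ =>
    integrable_finsetSum _ fun j _ => hint i j k]
  simp_rw [integral_finsetSum _ fun i _ => integrable_finsetSum _ fun j _ => hint i j _,
    integral_finsetSum _ fun j _ => hint _ j _, integral_const_mul, hcov]
  simp [trace, Finset.mul_sum, mul_comm]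

end WhiteNoise

section LinearAlgebra

variable {R : Type*} [CommRing R] {n p u q : Type*} [Fintype n] [Fintype p]
  [Fintype u] [DecidableEq u]

lemma envelope_least_squares_mul_add {Γ : Matrix p u R} {X : Matrix n p R} {β : Matrix p q R}
    (hβ : β = Γ * Γᵀ * β) (hM : IsUnit (Γᵀ * Xᵀ * X * Γ).det) (E : Matrix n q R) :
    Γ * (Γᵀ * Xᵀ * X * Γ)⁻¹ * Γᵀ * Xᵀ * (X * β + E) =
      β + Γ * (Γᵀ * Xᵀ * X * Γ)⁻¹ * Γᵀ * Xᵀ * E := by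
  rw [Matrix.mul_add]
  congr 1
  calc Γ * (Γᵀ * Xᵀ * X * Γ)⁻¹ * Γᵀ * Xᵀ * (X * β)
      = Γ * ((Γᵀ * Xᵀ * X * Γ)⁻¹ * (Γᵀ * Xᵀ * X * Γ)) * Γᵀ * β := by
        conv_lhs => rw [hβ]
        simp only [Matrix.mul_assoc]
    _ = β := by rw [nonsing_inv_mul _ hM, Matrix.mul_one, ← hβ]

lemma transpose_mul_mul_mul_of_mul_eq_self {Sx : Matrix p p R} {Γ : Matrix p u R}
    (hSxΓ : Sx * Γ = Γ) (hΓ : Γᵀ * Γ = 1) (B : Matrix u q R) :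
    (Γ * B)ᵀ * Sx * (Γ * B) = Bᵀ * B := by
  rw [transpose_mul, Matrix.mul_assoc, Matrix.mul_assoc, ← Matrix.mul_assoc Sx, hSxΓ,
    ← Matrix.mul_assoc Γᵀ, hΓ, Matrix.one_mul]

lemma trace_transpose_mul_self_inv_gram_mul_transpose (B : Matrix n u R)
    (hB : IsUnit (Bᵀ * B).det) :
    (((Bᵀ * B)⁻¹ * Bᵀ)ᵀ * ((Bᵀ * B)⁻¹ * Bᵀ)).trace = ((Bᵀ * B)⁻¹).trace := by
  rw [trace_mul_comm, transpose_mul, transpose_transpose, Matrix.mul_assoc,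
    ← Matrix.mul_assoc Bᵀ, ← Matrix.mul_assoc, nonsing_inv_mul _ hB, Matrix.one_mul, trace_transpose]

end LinearAlgebra

lemma Matrix.trace_inv_smul {K m : Type*} [Field K] [Fintype m] [DecidableEq m]
    (c : K) (M : Matrix m m K) : (c • M)⁻¹.trace = c⁻¹ * M⁻¹.trace := by
  by_cases hc : c = 0
  · simp [hc]
  by_cases hM : IsUnit M.det
  · have hinv : (c⁻¹ • M⁻¹) * (c • M) = 1 := by
      rw [smul_mul_smul_comm, inv_mul_cancel₀ hc, nonsing_inv_mul _ hM, one_smul]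
    rw [inv_eq_left_inv hinv, trace_smul, smul_eq_mul]
  · have hcM : ¬ IsUnit (c • M).det := by
      rw [det_smul]
      exact fun h => hM (isUnit_of_mul_isUnit_right h)
    rw [nonsing_inv_apply_not_isUnit _ hM, nonsing_inv_apply_not_isUnit _ hcM]
    simp

theorem population_niece_unbiased_and_risk_general
    (n p u q : ℕ) (hn : 0 < n)
    (Γ : Matrix (Fin p) (Fin u) ℝ) (hΓ : Γᵀ * Γ = 1)
    (Sx : Matrix (Fin p) (Fin p) ℝ) (hSxΓ : Sx * Γ = Γ)
    (β : Matrix (Fin p) (Fin q) ℝ) (hβ : β = Γ * Γᵀ * β)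
    (X : Matrix (Fin n) (Fin p) ℝ)
    (S : Matrix (Fin u) (Fin u) ℝ) (hS : S = ((n : ℝ)⁻¹) • (Γᵀ * Xᵀ * X * Γ))
    (hSinv : IsUnit S.det)
    (Se : Matrix (Fin q) (Fin q) ℝ)
    -- probability space and mean-zero noise with Var(vec E) = Σ_ε ⊗ I_n
    {Ω : Type*} [MeasurableSpace Ω] (P : Measure Ω) [IsProbabilityMeasure P]
    (E : Ω → Matrix (Fin n) (Fin q) ℝ)
    (hL2 : ∀ i k, MemLp (fun ω => E ω i k) 2 P)
    (hmean : ∀ i k, ∫ ω, E ω i k ∂P = 0)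
    (hcov : ∀ i j k l, ∫ ω, E ω i k * E ω j l ∂P = (if i = j then (1:ℝ) else 0) * Se k l)
    (Y : Ω → Matrix (Fin n) (Fin q) ℝ) (hY : ∀ ω, Y ω = X * β + E ω)
    -- the population NIECE estimator
    (βN : Ω → Matrix (Fin p) (Fin q) ℝ)
    (hβN : ∀ ω, βN ω = Γ * (Γᵀ * Xᵀ * X * Γ)⁻¹ * Γᵀ * Xᵀ * Y ω) :
    (∀ i k, ∫ ω, βN ω i k ∂P = β i k) ∧
    ∫ ω, ((βN ω - β)ᵀ * Sx * (βN ω - β)).trace ∂P =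
      ((n : ℝ)⁻¹) * Se.trace * (S⁻¹).trace := by
  have hM : IsUnit (Γᵀ * Xᵀ * X * Γ).det := by
    rw [hS, det_smul] at hSinv
    exact isUnit_of_mul_isUnit_right hSinv
  set A := Γ * (Γᵀ * Xᵀ * X * Γ)⁻¹ * Γᵀ * Xᵀ with hA
  have hdecomp : ∀ ω, βN ω = β + A * E ω := fun ω => by
    rw [hβN, hY, envelope_least_squares_mul_add hβ hM]
  have hint : ∀ i k, Integrable (fun ω => E ω i k) P := fun i k => (hL2 i k).integrable one_le_two
  refine ⟨fun i k => ?_, ?_⟩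
  · simp_rw [hdecomp, Matrix.add_apply]
    rw [integral_add (integrable_const _) (integrable_mul_apply hint A i k),
      integral_mul_apply_eq_zero hint hmean, integral_const]
    simp
  have hquad : ∀ ω, (βN ω - β)ᵀ * Sx * (βN ω - β) = (E ω)ᵀ * (Aᵀ * Sx * A) * E ω := fun ω => by
    simp only [hdecomp, add_sub_cancel_left, transpose_mul, Matrix.mul_assoc]
  have hgram : Γᵀ * Xᵀ * X * Γ = (X * Γ)ᵀ * (X * Γ) := by
    simp only [transpose_mul, Matrix.mul_assoc]
  have htrace : (Aᵀ * Sx * A).trace = ((Γᵀ * Xᵀ * X * Γ)⁻¹).trace := by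
    have hAΓ : A = Γ * (((X * Γ)ᵀ * (X * Γ))⁻¹ * (X * Γ)ᵀ) := by
      simp only [hA, transpose_mul, Matrix.mul_assoc]
    rw [hAΓ, transpose_mul_mul_mul_of_mul_eq_self hSxΓ hΓ, hgram,
      trace_transpose_mul_self_inv_gram_mul_transpose _ (hgram ▸ hM)]
  have hSinvM : (n : ℝ)⁻¹ * (S⁻¹).trace = ((Γᵀ * Xᵀ * X * Γ)⁻¹).trace := by
    rw [hS, trace_inv_smul, inv_inv, ← mul_assoc, inv_mul_cancel₀ (Nat.cast_ne_zero.mpr hn.ne'), one_mul]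
  simp_rw [hquad]
  rw [integral_trace_transpose_mul_mul hL2 hcov, htrace, ← hSinvM]
  ring

theorem population_niece_unbiased_and_risk
    (n p u q : ℕ) (hn : 0 < n) (hp : 0 < p) (hu : 0 < u) (hq : 0 < q)
    (Γ : Matrix (Fin p) (Fin u) ℝ) (hΓ : Γᵀ * Γ = 1)
    (Sx : Matrix (Fin p) (Fin p) ℝ) (hSx : Sx.IsSymm) (hSxΓ : Sx * Γ = Γ)
    (β : Matrix (Fin p) (Fin q) ℝ) (hβ : β = Γ * Γᵀ * β)
    (X : Matrix (Fin n) (Fin p) ℝ)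
    (S : Matrix (Fin u) (Fin u) ℝ) (hS : S = ((n : ℝ)⁻¹) • (Γᵀ * Xᵀ * X * Γ))
    (hSinv : IsUnit S.det)
    (Se : Matrix (Fin q) (Fin q) ℝ) (hSe : Se.PosSemidef)
    -- probability space and mean-zero noise with Var(vec E) = Σ_ε ⊗ I_n
    {Ω : Type*} [MeasurableSpace Ω] (P : Measure Ω) [IsProbabilityMeasure P]
    (E : Ω → Matrix (Fin n) (Fin q) ℝ)
    (hL2 : ∀ i k, MemLp (fun ω => E ω i k) 2 P)
    (hmean : ∀ i k, ∫ ω, E ω i k ∂P = 0)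
    (hcov : ∀ i j k l, ∫ ω, E ω i k * E ω j l ∂P = (if i = j then (1:ℝ) else 0) * Se k l)
    (Y : Ω → Matrix (Fin n) (Fin q) ℝ) (hY : ∀ ω, Y ω = X * β + E ω)
    -- the population NIECE estimator
    (βN : Ω → Matrix (Fin p) (Fin q) ℝ)
    (hβN : ∀ ω, βN ω = Γ * (Γᵀ * Xᵀ * X * Γ)⁻¹ * Γᵀ * Xᵀ * Y ω) :
    (∀ i k, ∫ ω, βN ω i k ∂P = β i k) ∧
    ∫ ω, ((βN ω - β)ᵀ * Sx * (βN ω - β)).trace ∂P =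
      ((n : ℝ)⁻¹) * Se.trace * (S⁻¹).trace :=
  population_niece_unbiased_and_risk_general n p u q hn Γ hΓ Sx hSxΓ β hβ X S hS hSinv Se P E hL2
    hmean hcov Y hY βN hβN
end

section
/- Let γ > 0, T > 0, and c > 0, and define the limiting EgReg risk function r(λ) = c² λ² m'(−λ) + T γ (m(−λ) − λ m'(−λ)) for λ > 0. Then λ* = T γ / c² minimizes r over (0, ∞), i.e. r(λ) ≥ r(λ*) for all λ > 0, and the minimum value is r(λ*) = T γ m(−λ*). -/
open Filter Topology

/-- The Stieltjes transform of the Marchenko–Pastur law with ratio `γ`,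
defined for `z < 0` by `m(z) = (1 − γ − z − √((1 − γ − z)² − 4γz)) / (2γz)`. -/
noncomputable def mMP (γ z : ℝ) : ℝ :=
  (1 - γ - z - Real.sqrt ((1 - γ - z) ^ 2 - 4 * γ * z)) / (2 * γ * z)

/-- The limiting EgReg risk function
`r(λ) = c² λ² m'(−λ) + T γ (m(−λ) − λ m'(−λ))` for `λ > 0`. -/
noncomputable def limRisk (γ T c lam : ℝ) : ℝ :=
  c ^ 2 * lam ^ 2 * deriv (mMP γ) (-lam) +
    T * γ * (mMP γ (-lam) - lam * deriv (mMP γ) (-lam))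

/-! Writing `s(λ) = √((λ + 1 + γ)² − 4γ)` and `λ* = Tγ/c²`, an explicit computation
gives `r(λ) = c²/(2γ) · (γ − 1 − λ* + ((λ + 1 + γ)(λ* + 1 + γ) − 4γ) / s(λ))`.
With `u = λ + 1 + γ`, `v = λ* + 1 + γ`, the reverse Cauchy–Schwarz inequality for the
Lorentzian form `(u, v) ↦ uv − 4γ`, namely `√(u² − 4γ) √(v² − 4γ) ≤ uv − 4γ`, shows that the
last fraction is at least `√(v² − 4γ)`, with equality at `u = v`. The value `r(λ*) = Tγ m(−λ*)`
is immediate from the definition, since the `m'` terms cancel at `λ = λ*`. -/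

namespace Real

/-- Aczél's inequality in dimension two; the identity
`(uv − k)² − (u² − k)(v² − k) = k (u − v)²` is the whole proof. -/
theorem sqrt_sq_sub_mul_sqrt_sq_sub_le {u v k : ℝ} (hu : 0 ≤ u) (hv : 0 ≤ v) (hk : 0 ≤ k)
    (hku : k ≤ u ^ 2) (hkv : k ≤ v ^ 2) :
    √(u ^ 2 - k) * √(v ^ 2 - k) ≤ u * v - k := by
  have hkuv : k ≤ u * v := by
    rcases le_total u v with h | h
    · nlinarith [mul_le_mul_of_nonneg_left h hu]
    · nlinarith [mul_le_mul_of_nonneg_left h hv]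
  rw [← sqrt_mul (sub_nonneg.2 hku)]
  refine sqrt_le_iff.2 ⟨sub_nonneg.2 hkuv, ?_⟩
  nlinarith [mul_nonneg hk (sq_nonneg (u - v))]

theorem sqrt_sq_sub_le_div {u v k : ℝ} (hu : 0 ≤ u) (hv : 0 ≤ v) (hk : 0 ≤ k)
    (hku : k < u ^ 2) (hkv : k ≤ v ^ 2) :
    √(v ^ 2 - k) ≤ (u * v - k) / √(u ^ 2 - k) := by
  rw [le_div_iff₀ (sqrt_pos.2 (sub_pos.2 hku)), mul_comm]
  exact sqrt_sq_sub_mul_sqrt_sq_sub_le hu hv hk hku.le hkv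

end Real

section MarchenkoPastur

variable {γ : ℝ}

theorem mMP_discr_pos (hγ : 0 < γ) {z : ℝ} (hz : z < 0) : 0 < (1 - γ - z) ^ 2 - 4 * γ * z := by
  nlinarith [sq_nonneg (1 - γ - z), mul_pos hγ (neg_pos.2 hz)]

theorem hasDerivAt_mMP (hγ : 0 < γ) {z : ℝ} (hz : z < 0) :
    HasDerivAt (mMP γ)
      (((γ - 1) * √((1 - γ - z) ^ 2 - 4 * γ * z) - (1 + γ) * z + (1 - γ) ^ 2) /
        (2 * γ * z ^ 2 * √((1 - γ - z) ^ 2 - 4 * γ * z))) z := by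
  have hD := mMP_discr_pos hγ hz
  have hdisc : HasDerivAt (fun z ↦ (1 - γ - z) ^ 2 - 4 * γ * z) (2 * (z - 1 - γ)) z := by
    refine ((((hasDerivAt_id' z).const_sub (1 - γ)).fun_pow 2).fun_sub
      ((hasDerivAt_id' z).const_mul (4 * γ))).congr_deriv ?_
    ring
  have hm := (((hasDerivAt_id' z).const_sub (1 - γ)).fun_sub (hdisc.sqrt hD.ne')).fun_div
    ((hasDerivAt_id' z).const_mul (2 * γ)) (mul_ne_zero (by positivity) hz.ne)
  refine hm.congr_deriv ?_
  set s := √((1 - γ - z) ^ 2 - 4 * γ * z)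
  have hs : 0 < s := Real.sqrt_pos.2 hD
  have hs2 : s ^ 2 = _ := Real.sq_sqrt hD.le
  have hz0 : z ≠ 0 := hz.ne
  field_simp
  linear_combination hs2

theorem four_mul_lt_sq_add_one_add (hγ : 0 ≤ γ) {x : ℝ} (hx : 0 < x) :
    4 * γ < (x + 1 + γ) ^ 2 := by
  nlinarith [sq_nonneg (1 - γ)]

theorem limRisk_eq_mul_mMP {T c lam : ℝ} (hopt : T * γ = c ^ 2 * lam) :
    limRisk γ T c lam = T * γ * mMP γ (-lam) := by
  rw [limRisk]
  linear_combination (-(lam * deriv (mMP γ) (-lam))) * hopt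

theorem limRisk_eq {T c lam lamS : ℝ} (hγ : 0 < γ) (hlam : 0 < lam)
    (hopt : T * γ = c ^ 2 * lamS) :
    limRisk γ T c lam = c ^ 2 / (2 * γ) * (γ - 1 - lamS +
      ((lam + 1 + γ) * (lamS + 1 + γ) - 4 * γ) / √((lam + 1 + γ) ^ 2 - 4 * γ)) := by
  have hz : -lam < 0 := neg_lt_zero.2 hlam
  have hD := sub_pos.2 (four_mul_lt_sq_add_one_add hγ.le hlam)
  have hdisc : (1 - γ - -lam) ^ 2 - 4 * γ * -lam = (lam + 1 + γ) ^ 2 - 4 * γ := by ring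
  rw [limRisk, (hasDerivAt_mMP hγ hz).deriv, hopt, mMP, hdisc]
  set s := √((lam + 1 + γ) ^ 2 - 4 * γ)
  have hs : 0 < s := Real.sqrt_pos.2 hD
  have hs2 : s ^ 2 = _ := Real.sq_sqrt hD.le
  field_simp
  linear_combination c ^ 2 * lamS * hs2

end MarchenkoPastur

theorem limRisk_minimized_at_optimal_lambda (γ T c : ℝ) (hγ : 0 < γ) (hT : 0 < T)
    (hc : 0 < c) :
    (∀ lam : ℝ, 0 < lam → limRisk γ T c (T * γ / c ^ 2) ≤ limRisk γ T c lam) ∧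
    limRisk γ T c (T * γ / c ^ 2) = T * γ * mMP γ (-(T * γ / c ^ 2)) := by
  set lamS := T * γ / c ^ 2
  have hlamS_pos : 0 < lamS := by positivity
  have hopt : T * γ = c ^ 2 * lamS := (mul_div_cancel₀ _ (by positivity)).symm
  refine ⟨fun lam hlam ↦ ?_, limRisk_eq_mul_mMP hopt⟩
  rw [limRisk_eq hγ hlamS_pos hopt, limRisk_eq hγ hlam hopt, ← sq, Real.div_sqrt]
  gcongr
  exact Real.sqrt_sq_sub_le_div (by positivity) (by positivity) (by positivity)
    (four_mul_lt_sq_add_one_add hγ.le hlam) (four_mul_lt_sq_add_one_add hγ.le hlamS_pos).le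
end
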